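/- arXiv:1410.5226 — 8 statements merged into one kernel-verified Lean document; each statement's English description precedes it below -/
import Mathlib

section
/- Let c > 0, let T ∈ (0, ∞], and let θ : [0, T) → ℝ be differentiable with θ′(t) ≤ −θ(t)²/c for all t ∈ [0, T). If θ(0) < 0, then for every t ∈ [0, T) with t < c/(−θ(0)) one has c + θ(0)·t > 0 and θ(t) ≤ c·θ(0)/(c + θ(0)·t). -/
/-!
Since `θ' ≤ -θ²/c ≤ 0`, `θ` stays below `θ 0 < 0`, so `c/θ` is defined, and
`(c/θ - s)' = -c θ'/θ² - 1 ≥ 0`. Hence `c/θ(t) ≥ c/θ(0) + t = (c + θ(0) t)/θ(0)`,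
which inverts to the bound while `c + θ(0) t > 0`.
-/

open Set

theorem antitoneOn_of_deriv_le_neg_sq_div {D : Set ℝ} (hD : Convex ℝ D) {c : ℝ} (hc : 0 ≤ c)
    {θ : ℝ → ℝ} (hdiff : ∀ s ∈ D, DifferentiableAt ℝ θ s)
    (hineq : ∀ s ∈ D, deriv θ s ≤ -θ s ^ 2 / c) : AntitoneOn θ D := by
  refine antitoneOn_of_deriv_nonpos hD (fun s hs => (hdiff s hs).continuousAt.continuousWithinAt)
    (fun s hs => (hdiff s (interior_subset hs)).differentiableWithinAt) fun s hs => ?_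
  have hsq : -θ s ^ 2 / c ≤ 0 := div_nonpos_of_nonpos_of_nonneg (neg_nonpos.2 (sq_nonneg _)) hc
  exact (hineq s (interior_subset hs)).trans hsq

theorem monotoneOn_div_sub_of_deriv_le_neg_sq_div {D : Set ℝ} (hD : Convex ℝ D) {c : ℝ}
    (hc : 0 < c) {θ : ℝ → ℝ} (hdiff : ∀ s ∈ D, DifferentiableAt ℝ θ s)
    (hneg : ∀ s ∈ D, θ s < 0) (hineq : ∀ s ∈ D, deriv θ s ≤ -θ s ^ 2 / c) :
    MonotoneOn (fun s => c / θ s - s) D := by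
  have hderiv : ∀ s ∈ D, HasDerivAt (fun s => c / θ s - s)
      ((0 * θ s - c * deriv θ s) / θ s ^ 2 - 1) s := fun s hs =>
    ((hasDerivAt_const s c).div (hdiff s hs).hasDerivAt (hneg s hs).ne).sub (hasDerivAt_id s)
  refine monotoneOn_of_deriv_nonneg hD
    (fun s hs => (hderiv s hs).continuousAt.continuousWithinAt)
    (fun s hs => (hderiv s (interior_subset hs)).differentiableAt.differentiableWithinAt)
    fun s hs => ?_
  have hs := interior_subset hs
  rw [(hderiv s hs).deriv, sub_nonneg, one_le_div (sq_pos_of_neg (hneg s hs))]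
  have := mul_le_mul_of_nonneg_left (hineq s hs) hc.le
  rw [mul_div_cancel₀ _ hc.ne'] at this
  linarith

theorem le_mul_div_of_div_add_le_div {a b c t : ℝ} (ha : a < 0) (hb : b < 0)
    (hpos : 0 < c + a * t) (h : c / a + t ≤ c / b) : b ≤ c * a / (c + a * t) := by
  rw [le_div_iff₀ hpos]
  calc b * (c + a * t) = (c / a + t) * (b * a) := by field_simp [ha.ne]
    _ ≤ c / b * (b * a) := mul_le_mul_of_nonneg_right h (mul_pos_of_neg_of_neg hb ha).le
    _ = c * a := by field_simp [hb.ne]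

theorem raychaudhuri_comparison_estimate_general
    (c : ℝ) (hc : 0 < c) (T : EReal)
    (θ : ℝ → ℝ)
    (hdiff : ∀ t : ℝ, 0 ≤ t → (t : EReal) < T → DifferentiableAt ℝ θ t)
    (hineq : ∀ t : ℝ, 0 ≤ t → (t : EReal) < T → deriv θ t ≤ -(θ t) ^ 2 / c)
    (h0 : θ 0 < 0)
    (t : ℝ) (ht0 : 0 ≤ t) (htT : (t : EReal) < T) (htb : t < c / (-θ 0)) :
    0 < c + θ 0 * t ∧ θ t ≤ c * θ 0 / (c + θ 0 * t) := by
  have hpos : 0 < c + θ 0 * t := by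
    have := (lt_div_iff₀ (neg_pos.2 h0)).1 htb
    linarith
  have hlt : ∀ s ∈ Icc 0 t, (s : EReal) < T := fun s hs =>
    (EReal.coe_le_coe_iff.2 hs.2).trans_lt htT
  have hdiff' : ∀ s ∈ Icc 0 t, DifferentiableAt ℝ θ s := fun s hs => hdiff s hs.1 (hlt s hs)
  have hineq' : ∀ s ∈ Icc 0 t, deriv θ s ≤ -θ s ^ 2 / c := fun s hs => hineq s hs.1 (hlt s hs)
  have h0mem : (0 : ℝ) ∈ Icc 0 t := left_mem_Icc.2 ht0
  have htmem : t ∈ Icc 0 t := right_mem_Icc.2 ht0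
  have hanti := antitoneOn_of_deriv_le_neg_sq_div (convex_Icc 0 t) hc.le hdiff' hineq'
  have hneg : ∀ s ∈ Icc 0 t, θ s < 0 := fun s hs => (hanti h0mem hs hs.1).trans_lt h0
  have hmono := monotoneOn_div_sub_of_deriv_le_neg_sq_div (convex_Icc 0 t) hc hdiff' hneg hineq'
    h0mem htmem ht0
  refine ⟨hpos, le_mul_div_of_div_add_le_div h0 (hneg t htmem) hpos ?_⟩
  simp only [sub_zero] at hmono
  linarith

/-- Focusing comparison estimate for the Raychaudhuri inequality:
if `θ' ≤ -θ²/c` on `[0, T)` and `θ 0 < 0`, then for every `t ∈ [0, T)` with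
`t < c / (-θ 0)` one has `c + θ 0 * t > 0` and `θ t ≤ c * θ 0 / (c + θ 0 * t)`. -/
theorem raychaudhuri_comparison_estimate
    (c : ℝ) (hc : 0 < c) (T : EReal) (hT : 0 < T)
    (θ : ℝ → ℝ)
    (hdiff : ∀ t : ℝ, 0 ≤ t → (t : EReal) < T → DifferentiableAt ℝ θ t)
    (hineq : ∀ t : ℝ, 0 ≤ t → (t : EReal) < T → deriv θ t ≤ -(θ t) ^ 2 / c)
    (h0 : θ 0 < 0)
    (t : ℝ) (ht0 : 0 ≤ t) (htT : (t : EReal) < T) (htb : t < c / (-θ 0)) :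
    0 < c + θ 0 * t ∧ θ t ≤ c * θ 0 / (c + θ 0 * t) :=
  raychaudhuri_comparison_estimate_general c hc T θ hdiff hineq h0 t ht0 htT htb
end

section
/- Let c > 0, let T ∈ (0, ∞], and let θ : [0, T) → ℝ be differentiable with θ′(t) ≤ −θ(t)²/c for all t ∈ [0, T). If θ(0) < 0, then T ≤ c/(−θ(0)); that is, θ cannot remain finite (be defined as a differentiable solution of the inequality) beyond the parameter value c/(−θ(0)). -/
/-!
Since `θ' ≤ -θ²/c ≤ 0`, `θ` decreases and stays negative, so `1/θ` is defined and
`(1/θ)' = -θ'/θ² ≥ 1/c`. Hence `1/θ(t) ≥ 1/θ(0) + t/c`, and as the left side is negative,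
`t < c/(-θ(0))` for every `t` in the domain.
-/

open Set

section Riccati

variable {c a b : ℝ} {θ : ℝ → ℝ}

lemma antitoneOn_of_deriv_le_neg_sq_div_s1 (hc : 0 ≤ c)
    (hdiff : ∀ t ∈ Icc a b, DifferentiableAt ℝ θ t)
    (hineq : ∀ t ∈ Ioo a b, deriv θ t ≤ -θ t ^ 2 / c) :
    AntitoneOn θ (Icc a b) := by
  refine antitoneOn_of_deriv_nonpos (convex_Icc a b)
    (fun t ht ↦ (hdiff t ht).continuousAt.continuousWithinAt) ?_ ?_
  · rw [interior_Icc]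
    exact fun t ht ↦ (hdiff t (Ioo_subset_Icc_self ht)).differentiableWithinAt
  · rw [interior_Icc]
    intro t ht
    exact (hineq t ht).trans (div_nonpos_of_nonpos_of_nonneg (neg_nonpos.2 (sq_nonneg _)) hc)

lemma inv_le_deriv_inv_of_deriv_le_neg_sq_div {t : ℝ}
    (hθ : DifferentiableAt ℝ θ t) (hne : θ t ≠ 0) (h : deriv θ t ≤ -θ t ^ 2 / c) :
    c⁻¹ ≤ deriv θ⁻¹ t := by
  rwa [deriv_inv'' hθ hne, le_div_iff₀ (by positivity), inv_mul_eq_div, le_neg, ← neg_div]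

theorem sub_lt_div_neg_of_deriv_le_neg_sq_div (hc : 0 < c) (hab : a ≤ b)
    (hdiff : ∀ t ∈ Icc a b, DifferentiableAt ℝ θ t)
    (hineq : ∀ t ∈ Ioo a b, deriv θ t ≤ -θ t ^ 2 / c) (ha : θ a < 0) :
    b - a < c / -θ a := by
  have hneg : ∀ t ∈ Icc a b, θ t < 0 := fun t ht ↦
    (antitoneOn_of_deriv_le_neg_sq_div_s1 hc.le hdiff hineq (left_mem_Icc.2 hab) ht ht.1).trans_lt ha
  have hinv : c⁻¹ * (b - a) ≤ (θ b)⁻¹ - (θ a)⁻¹ := by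
    refine (convex_Icc a b).mul_sub_le_image_sub_of_le_deriv
      (fun t ht ↦ ((hdiff t ht).inv (hneg t ht).ne).continuousAt.continuousWithinAt) ?_ ?_
      a (left_mem_Icc.2 hab) b (right_mem_Icc.2 hab) hab
    · rw [interior_Icc]
      exact fun t ht ↦ ((hdiff t (Ioo_subset_Icc_self ht)).inv
        (hneg t (Ioo_subset_Icc_self ht)).ne).differentiableWithinAt
    · rw [interior_Icc]
      exact fun t ht ↦ inv_le_deriv_inv_of_deriv_le_neg_sq_div
        (hdiff t (Ioo_subset_Icc_self ht)) (hneg t (Ioo_subset_Icc_self ht)).ne (hineq t ht)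
  have hb : (θ b)⁻¹ < 0 := inv_lt_zero.2 (hneg b (right_mem_Icc.2 hab))
  rw [inv_mul_eq_div, div_le_iff₀ hc] at hinv
  calc b - a ≤ ((θ b)⁻¹ - (θ a)⁻¹) * c := hinv
    _ < -(θ a)⁻¹ * c := by gcongr; linarith
    _ = c / -θ a := by rw [div_neg, neg_mul, inv_mul_eq_div]

end Riccati

theorem raychaudhuri_focusing_general
    (c : ℝ) (hc : 0 < c) (T : EReal)
    (θ : ℝ → ℝ)
    (hdiff : ∀ t : ℝ, 0 ≤ t → (t : EReal) < T → DifferentiableAt ℝ θ t)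
    (hineq : ∀ t : ℝ, 0 ≤ t → (t : EReal) < T → deriv θ t ≤ -(θ t) ^ 2 / c)
    (h0 : θ 0 < 0) :
    T ≤ ((c / (-θ 0) : ℝ) : EReal) := by
  by_contra! hT
  obtain ⟨t₀, hct₀, ht₀T⟩ := EReal.lt_iff_exists_real_btwn.1 hT
  have hct₀ : c / -θ 0 < t₀ := EReal.coe_lt_coe_iff.1 hct₀
  have ht₀ : 0 ≤ t₀ := (div_pos hc (neg_pos.2 h0)).le.trans hct₀.le
  have hdom : ∀ t ∈ Icc 0 t₀, 0 ≤ t ∧ (t : EReal) < T := fun t ht ↦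
    ⟨ht.1, (EReal.coe_le_coe_iff.2 ht.2).trans_lt ht₀T⟩
  have := sub_lt_div_neg_of_deriv_le_neg_sq_div hc ht₀
    (fun t ht ↦ hdiff t (hdom t ht).1 (hdom t ht).2)
    (fun t ht ↦ hineq t (hdom t (Ioo_subset_Icc_self ht)).1 (hdom t (Ioo_subset_Icc_self ht)).2) h0
  linarith

/-- Focusing effect: a differentiable solution of the Riccati differential
inequality `θ' ≤ -θ²/c` on `[0, T)` with `θ 0 < 0` cannot exist beyond the
parameter value `c / (-θ 0)`; that is, `T ≤ c / (-θ 0)`. -/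
theorem raychaudhuri_focusing
    (c : ℝ) (hc : 0 < c) (T : EReal) (hT : 0 < T)
    (θ : ℝ → ℝ)
    (hdiff : ∀ t : ℝ, 0 ≤ t → (t : EReal) < T → DifferentiableAt ℝ θ t)
    (hineq : ∀ t : ℝ, 0 ≤ t → (t : EReal) < T → deriv θ t ≤ -(θ t) ^ 2 / c)
    (h0 : θ 0 < 0) :
    T ≤ ((c / (-θ 0) : ℝ) : EReal) :=
  raychaudhuri_focusing_general c hc T θ hdiff hineq h0
end

section
/- Let c > 0 and let θ : [0, ∞) → ℝ be differentiable with θ′(t) ≤ −θ(t)²/c for all t ≥ 0. Then θ(t) ≥ 0 for all t ≥ 0. -/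
/-!
If `θ(t₀) < 0`, then `θ` stays negative afterwards (it is nonincreasing), and the Riccati
inequality says exactly that `1/θ - t/c` is nondecreasing. Hence
`1/θ(t) ≥ 1/θ(t₀) + (t - t₀)/c`, whose right side reaches `0` at `t = t₀ - c/θ(t₀)`:
the negative solution must blow up to `-∞` in finite time.
-/

open Set

theorem monotoneOn_inv_sub_div_of_deriv_le_neg_sq_div {c : ℝ} {θ : ℝ → ℝ} {D : Set ℝ}
    (hD : Convex ℝ D) (hdiff : ∀ t ∈ D, DifferentiableAt ℝ θ t) (hne : ∀ t ∈ D, θ t ≠ 0)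
    (hineq : ∀ t ∈ interior D, deriv θ t ≤ -θ t ^ 2 / c) :
    MonotoneOn (fun t => (θ t)⁻¹ - t / c) D := by
  have hderiv : ∀ t ∈ D, HasDerivAt (fun t => (θ t)⁻¹ - t / c)
      (-deriv θ t / θ t ^ 2 - 1 / c) t := fun t ht =>
    ((hdiff t ht).hasDerivAt.inv (hne t ht)).sub ((hasDerivAt_id t).div_const c)
  refine monotoneOn_of_deriv_nonneg hD
    (fun t ht => (hderiv t ht).continuousAt.continuousWithinAt)
    (fun t ht => (hderiv t (interior_subset ht)).differentiableAt.differentiableWithinAt)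
    fun t ht => ?_
  have hsq : θ t ^ 2 ≠ 0 := pow_ne_zero 2 (hne t (interior_subset ht))
  calc (0 : ℝ) = θ t ^ 2 / c / θ t ^ 2 - 1 / c := by rw [div_right_comm, div_self hsq, sub_self]
    _ ≤ -deriv θ t / θ t ^ 2 - 1 / c := by
      gcongr
      linarith [hineq t ht, neg_div c (θ t ^ 2)]
    _ = deriv (fun t => (θ t)⁻¹ - t / c) t := (hderiv t (interior_subset ht)).deriv.symm

theorem not_forall_neg_of_deriv_le_neg_sq_div {c t₀ : ℝ} {θ : ℝ → ℝ} (hc : 0 < c)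
    (hdiff : ∀ t ∈ Ici t₀, DifferentiableAt ℝ θ t)
    (hineq : ∀ t ∈ Ioi t₀, deriv θ t ≤ -θ t ^ 2 / c) :
    ¬ ∀ t ∈ Ici t₀, θ t < 0 := by
  intro hneg
  have hmono := monotoneOn_inv_sub_div_of_deriv_le_neg_sq_div (convex_Ici t₀) hdiff
    (fun t ht => (hneg t ht).ne) (by rwa [interior_Ici])
  have hθ₀ := hneg t₀ self_mem_Ici
  set T := t₀ - c / θ t₀
  have hT : t₀ ≤ T := by
    have : c / θ t₀ < 0 := div_neg_of_pos_of_neg hc hθ₀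
    linarith
  have hblowup : 0 ≤ (θ T)⁻¹ := by
    have h := hmono self_mem_Ici hT hT
    have hT_div : T / c = t₀ / c - (θ t₀)⁻¹ := by
      simp only [T]; field_simp
    simp only [hT_div] at h
    linarith
  exact (inv_lt_zero.mpr (hneg T hT)).not_ge hblowup

/-- Along a future-complete congruence obeying the convergence condition, the
expansion can never become negative: if `θ' ≤ -θ²/c` on `[0, ∞)` then `θ ≥ 0`
on `[0, ∞)`. -/
theorem expansion_nonneg_of_future_complete
    (c : ℝ) (hc : 0 < c) (θ : ℝ → ℝ)
    (hdiff : ∀ t : ℝ, 0 ≤ t → DifferentiableAt ℝ θ t)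
    (hineq : ∀ t : ℝ, 0 ≤ t → deriv θ t ≤ -(θ t) ^ 2 / c) :
    ∀ t : ℝ, 0 ≤ t → 0 ≤ θ t := by
  intro t₀ ht₀
  by_contra! hθ₀
  have hanti : AntitoneOn θ (Ici 0) := by
    refine antitoneOn_of_deriv_nonpos (convex_Ici 0)
      (fun t ht => (hdiff t ht).continuousAt.continuousWithinAt)
      (fun t ht => (hdiff t (interior_subset ht)).differentiableWithinAt) fun t ht => ?_
    rw [interior_Ici] at ht
    exact (hineq t ht.le).trans
      (div_nonpos_of_nonpos_of_nonneg (neg_nonpos.mpr (sq_nonneg _)) hc.le)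
  exact not_forall_neg_of_deriv_le_neg_sq_div hc (fun t ht => hdiff t (ht₀.trans ht))
    (fun t ht => hineq t (ht₀.trans ht.le))
    fun t ht => (hanti ht₀ (ht₀.trans ht) ht).trans_lt hθ₀
end

section
/- Let c > 0 and let θ : ℝ → ℝ be differentiable with θ′(t) ≤ −θ(t)²/c for all t ∈ ℝ. Then θ(t) = 0 for all t ∈ ℝ. -/
/-!
Along the Riccati inequality `θ' ≤ -θ²/c`, the quantity `1/θ - t/c` is nondecreasing wherever
`θ ≠ 0`. Since `θ' ≤ 0`, a negative value `θ t₀ < 0` persists for all later times, and then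
`1/θ t ≥ 1/θ t₀ + (t - t₀)/c` becomes nonnegative at `t = t₀ - c/θ t₀`, which is absurd:
forward completeness forces `θ ≥ 0`. Applying this to the time reversal `t ↦ -θ (-t)`, which
satisfies the same inequality, backward completeness forces `θ ≤ 0`.
-/

section Riccati

variable {c : ℝ} {θ θ' : ℝ → ℝ}

lemma monotoneOn_inv_sub_div_of_riccati {s : Set ℝ} (hs : Convex ℝ s)
    (hθ : ∀ t ∈ s, HasDerivAt θ (θ' t) t) (hric : ∀ t ∈ s, θ' t ≤ -θ t ^ 2 / c)
    (hne : ∀ t ∈ s, θ t ≠ 0) :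
    MonotoneOn (fun t ↦ (θ t)⁻¹ - t / c) s := by
  have hderiv : ∀ t ∈ s, HasDerivAt (fun t ↦ (θ t)⁻¹ - t / c) (-θ' t / θ t ^ 2 - 1 / c) t :=
    fun t ht ↦ ((hθ t ht).inv (hne t ht)).sub ((hasDerivAt_id t).div_const c)
  refine monotoneOn_of_hasDerivWithinAt_nonneg hs
    (fun t ht ↦ (hderiv t ht).continuousAt.continuousWithinAt)
    (fun t ht ↦ (hderiv t (interior_subset ht)).hasDerivWithinAt) fun t ht ↦ ?_
  have ht : t ∈ s := interior_subset ht
  have hsq : 0 < θ t ^ 2 := pow_two_pos_of_ne_zero (hne t ht)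
  have hbound : 1 / c ≤ -θ' t / θ t ^ 2 := by
    rw [le_div_iff₀ hsq, one_div_mul_eq_div]
    linarith [hric t ht, neg_div c (θ t ^ 2)]
  linarith

lemma antitone_of_riccati (hc : 0 < c) (hθ : ∀ t, HasDerivAt θ (θ' t) t)
    (hric : ∀ t, θ' t ≤ -θ t ^ 2 / c) : Antitone θ :=
  antitone_of_hasDerivAt_nonpos hθ fun t ↦
    (hric t).trans (by rw [neg_div]; exact neg_nonpos.2 (by positivity))

lemma nonneg_of_riccati (hc : 0 < c) (hθ : ∀ t, HasDerivAt θ (θ' t) t)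
    (hric : ∀ t, θ' t ≤ -θ t ^ 2 / c) (t₀ : ℝ) : 0 ≤ θ t₀ := by
  by_contra! hθ₀
  have hneg : ∀ t ∈ Set.Ici t₀, θ t < 0 := fun t ht ↦
    (antitone_of_riccati hc hθ hric ht).trans_lt hθ₀
  have hmono := monotoneOn_inv_sub_div_of_riccati (convex_Ici t₀) (fun t _ ↦ hθ t)
    (fun t _ ↦ hric t) fun t ht ↦ (hneg t ht).ne
  set T := t₀ - c / θ t₀
  have hT : t₀ ≤ T := by
    have hshift : c / θ t₀ < 0 := div_neg_of_pos_of_neg hc hθ₀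
    simp only [T]; linarith
  have hinc : (θ t₀)⁻¹ - t₀ / c ≤ (θ T)⁻¹ - T / c := hmono Set.self_mem_Ici hT hT
  have hTc : T / c = t₀ / c - (θ t₀)⁻¹ := by
    simp only [T]; field_simp
  have hθT : (θ T)⁻¹ < 0 := inv_lt_zero.2 (hneg T hT)
  linarith

end Riccati

/-- Raychaudhuri's observation: a congruence complete to the past and to the
future obeying the convergence condition must have identically vanishing
expansion: if `θ' ≤ -θ²/c` on all of `ℝ` then `θ ≡ 0`. -/
theorem expansion_zero_of_complete
    (c : ℝ) (hc : 0 < c) (θ : ℝ → ℝ)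
    (hdiff : Differentiable ℝ θ)
    (hineq : ∀ t : ℝ, deriv θ t ≤ -(θ t) ^ 2 / c) :
    ∀ t : ℝ, θ t = 0 := by
  intro t
  have hθ : ∀ t, HasDerivAt θ (deriv θ t) t := fun t ↦ (hdiff t).hasDerivAt
  have hreflect : ∀ t, HasDerivAt (fun s ↦ -θ (-s)) (deriv θ (-t)) t := fun t ↦ by
    simpa [Function.comp_def] using ((hθ (-t)).comp t (hasDerivAt_neg t)).fun_neg
  have hforward : 0 ≤ θ t := nonneg_of_riccati hc hθ hineq t
  have hbackward : 0 ≤ -θ (-(-t)) :=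
    nonneg_of_riccati hc hreflect (fun s ↦ by simpa using hineq (-s)) (-t)
  rw [neg_neg] at hbackward
  linarith
end

section
/- Let c > 0 and let r : [0, ∞) → ℝ be continuous with r(t) ≥ 0 for all t and ∫₀ᵗ r(s) ds → ∞ as t → ∞. Then there is no differentiable function θ : [0, ∞) → ℝ satisfying θ′(t) ≤ −θ(t)²/c − r(t) for all t ≥ 0. -/
/-!
Since `θ' ≤ -r`, integrating gives `θ t ≤ θ 0 - ∫₀ᵗ r → -∞`, so `θ < 0` on some `[T, ∞)`.
There the Riccati inequality `θ' ≤ -θ²/c` makes `t - c/θ t` antitone, whence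
`t - T ≤ c/θ t - c/θ T < -c/θ T` for all `t ≥ T`, which fails for large `t`.
-/

open Set Filter MeasureTheory

theorem le_sub_integral_of_deriv_le_neg {f r : ℝ → ℝ} {a b : ℝ} (hab : a ≤ b)
    (hf : ∀ x ∈ Icc a b, DifferentiableAt ℝ f x) (hr : IntegrableOn r (Icc a b))
    (hle : ∀ x ∈ Ioo a b, deriv f x ≤ -r x) :
    f b ≤ f a - ∫ x in a..b, r x := by
  have h := intervalIntegral.sub_le_integral_of_hasDeriv_right_of_le hab
    (fun x hx => (hf x hx).continuousAt.continuousWithinAt)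
    (fun x hx => (hf x (Ioo_subset_Icc_self hx)).hasDerivAt.hasDerivWithinAt) hr.neg hle
  simp only [Pi.neg_apply, intervalIntegral.integral_neg] at h
  linarith

theorem antitoneOn_sub_div_of_deriv_le_neg_sq_div {c : ℝ} (hc : 0 < c) {θ : ℝ → ℝ} {T : ℝ}
    (hdiff : ∀ t ∈ Ici T, DifferentiableAt ℝ θ t) (hneg : ∀ t ∈ Ici T, θ t < 0)
    (hle : ∀ t ∈ Ici T, deriv θ t ≤ -θ t ^ 2 / c) :
    AntitoneOn (fun t => t - c / θ t) (Ici T) := by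
  have hderiv : ∀ t ∈ Ici T,
      HasDerivAt (fun t => t - c / θ t) (1 + c * deriv θ t / θ t ^ 2) t := fun t ht =>
    ((hasDerivAt_id' t).fun_sub ((hasDerivAt_const t c).fun_div (hdiff t ht).hasDerivAt
      (hneg t ht).ne)).congr_deriv (by ring)
  refine antitoneOn_of_deriv_nonpos (convex_Ici T)
    (fun t ht => (hderiv t ht).continuousAt.continuousWithinAt)
    (fun t ht => (hderiv t (interior_subset ht)).differentiableAt.differentiableWithinAt)
    fun t ht => ?_
  have ht : t ∈ Ici T := interior_subset ht
  have hcθ' : deriv θ t * c ≤ -θ t ^ 2 := (le_div_iff₀ hc).1 (hle t ht)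
  rw [(hderiv t ht).deriv, ← le_neg_iff_add_nonpos_left, div_le_iff₀ (sq_pos_of_neg (hneg t ht))]
  linarith

theorem exists_nonneg_of_deriv_le_neg_sq_div {c : ℝ} (hc : 0 < c) {θ : ℝ → ℝ} {T : ℝ}
    (hdiff : ∀ t ∈ Ici T, DifferentiableAt ℝ θ t) (hle : ∀ t ∈ Ici T, deriv θ t ≤ -θ t ^ 2 / c) :
    ∃ t ∈ Ici T, 0 ≤ θ t := by
  by_contra! hneg
  have hT : 0 < -(c / θ T) := neg_pos.2 (div_neg_of_pos_of_neg hc (hneg T self_mem_Ici))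
  set t := T - c / θ T + 1
  have ht : T ≤ t := by linarith
  have hanti := antitoneOn_sub_div_of_deriv_le_neg_sq_div hc hdiff hneg hle self_mem_Ici ht ht
  have ht_neg := div_neg_of_pos_of_neg hc (hneg t ht)
  simp only at hanti
  linarith

/-- Analytic core of singularity theorems with an averaged energy condition:
if `r ≥ 0` is continuous on `[0, ∞)` and `∫₀ᵗ r → ∞` as `t → ∞`, then no
differentiable `θ : [0, ∞) → ℝ` satisfies `θ' ≤ -θ²/c - r`. -/
theorem no_complete_solution_averaged_condition
    (c : ℝ) (hc : 0 < c) (r : ℝ → ℝ)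
    (hrcont : ContinuousOn r (Set.Ici 0))
    (hrpos : ∀ t : ℝ, 0 ≤ t → 0 ≤ r t)
    (hrdiv : Filter.Tendsto (fun t : ℝ => ∫ s in (0 : ℝ)..t, r s)
      Filter.atTop Filter.atTop) :
    ¬ ∃ θ : ℝ → ℝ, (∀ t : ℝ, 0 ≤ t → DifferentiableAt ℝ θ t) ∧
      (∀ t : ℝ, 0 ≤ t → deriv θ t ≤ -(θ t) ^ 2 / c - r t) := by
  rintro ⟨θ, hdiff, hineq⟩
  have hsq : ∀ t, -θ t ^ 2 / c ≤ 0 := fun t =>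
    div_nonpos_of_nonpos_of_nonneg (neg_nonpos.2 (sq_nonneg _)) hc.le
  have hbound : ∀ t, 0 ≤ t → θ t ≤ θ 0 - ∫ s in (0 : ℝ)..t, r s := fun t ht =>
    le_sub_integral_of_deriv_le_neg ht (fun x hx => hdiff x hx.1)
      ((hrcont.mono Icc_subset_Ici_self).integrableOn_Icc)
      (fun x hx => by linarith [hineq x hx.1.le, hsq x])
  obtain ⟨T, hT⟩ := eventually_atTop.1
    ((hrdiv.eventually_gt_atTop (θ 0)).and (eventually_ge_atTop 0))
  obtain ⟨t, ht, hθt⟩ := exists_nonneg_of_deriv_le_neg_sq_div hc (T := T)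
    (fun t ht => hdiff t (hT t ht).2)
    (fun t ht => by linarith [hineq t (hT t ht).2, hrpos t (hT t ht).2])
  linarith [hbound t (hT t ht).2, (hT t ht).1]
end

section
/- Let A, Λ ∈ ℝ, t₀ ∈ ℝ, T ∈ (t₀, ∞], and let a : [t₀, T) → ℝ be twice differentiable with a(t) > 0, a″(t) = (Λ/3)·a(t) − A/(2·a(t)²), and Λ·a(t)³ < (3/2)·A for all t ∈ [t₀, T). If a′(t₀) < 0, then T ≤ t₀ + a(t₀)/(−a′(t₀)). -/
/-! The constraint `Λ a³ < (3/2) A` makes the right-hand side of the field equation negative,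
so `a` is concave while it exists. A concave function lies below its tangent line at `t₀`,
which has negative slope `a'(t₀)` and vanishes at `t₀ + a(t₀)/(-a'(t₀))`; since `a` stays
positive, the solution cannot survive up to that time. -/

open Set

lemma ConcaveOn.le_tangent {S : Set ℝ} {f : ℝ → ℝ} {x y : ℝ} (hfc : ConcaveOn ℝ S f)
    (hx : x ∈ S) (hy : y ∈ S) (hxy : x ≤ y) (hfd : DifferentiableAt ℝ f x) :
    f y ≤ f x + deriv f x * (y - x) := by
  rcases hxy.eq_or_lt with rfl | hlt
  · simp
  have hslope := hfc.slope_le_deriv hx hy hlt hfd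
  rw [slope_def_field, div_le_iff₀ (sub_pos.mpr hlt)] at hslope
  linarith

lemma friedman_accel_neg {A Λ x : ℝ} (hx : 0 < x) (hΛ : Λ * x ^ 3 < (3 / 2) * A) :
    (Λ / 3) * x - A / (2 * x ^ 2) < 0 := by
  have hsplit : (Λ / 3) * x - A / (2 * x ^ 2) = (2 * (Λ * x ^ 3) - 3 * A) / (6 * x ^ 2) := by
    field_simp
    ring
  rw [hsplit]
  exact div_neg_of_neg_of_pos (by linarith) (by positivity)

lemma friedman_concaveOn {A Λ : ℝ} {a : ℝ → ℝ} {S : Set ℝ} (hS : Convex ℝ S)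
    (hdiff : ∀ t ∈ S, DifferentiableAt ℝ a t)
    (hdiff2 : ∀ t ∈ S, DifferentiableAt ℝ (deriv a) t)
    (hpos : ∀ t ∈ S, 0 < a t)
    (hode : ∀ t ∈ S, deriv (deriv a) t = (Λ / 3) * a t - A / (2 * (a t) ^ 2))
    (hΛ : ∀ t ∈ S, Λ * (a t) ^ 3 < (3 / 2) * A) :
    ConcaveOn ℝ S a :=
  concaveOn_of_deriv2_nonpos' hS (fun t ht => (hdiff t ht).differentiableWithinAt)
    (fun t ht => (hdiff2 t ht).differentiableWithinAt) fun t ht => by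
      rw [Function.iterate_succ_apply, Function.iterate_one, hode t ht]
      exact (friedman_accel_neg (hpos t ht) (hΛ t ht)).le

/-- Friedman's 'creation time' singularity: for a closed dust universe with
`a'' = (Λ/3)·a - A/(2a²)` and `Λ·a³ < (3/2)·A`, a contracting solution
(`a'(t₀) < 0`) with `a > 0` on `[t₀, T)` satisfies `T ≤ t₀ + a(t₀)/(-a'(t₀))`. -/
theorem friedman_creation_time
    (A Λ t₀ : ℝ) (T : EReal) (hT : (t₀ : EReal) < T)
    (a : ℝ → ℝ)
    (hdiff : ∀ t : ℝ, t₀ ≤ t → (t : EReal) < T → DifferentiableAt ℝ a t)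
    (hdiff2 : ∀ t : ℝ, t₀ ≤ t → (t : EReal) < T → DifferentiableAt ℝ (deriv a) t)
    (hpos : ∀ t : ℝ, t₀ ≤ t → (t : EReal) < T → 0 < a t)
    (hode : ∀ t : ℝ, t₀ ≤ t → (t : EReal) < T →
      deriv (deriv a) t = (Λ / 3) * a t - A / (2 * (a t) ^ 2))
    (hΛ : ∀ t : ℝ, t₀ ≤ t → (t : EReal) < T → Λ * (a t) ^ 3 < (3 / 2) * A)
    (hcontract : deriv a t₀ < 0) :
    T ≤ ((t₀ + a t₀ / (-(deriv a t₀)) : ℝ) : EReal) := by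
  by_contra! hlt
  set B := t₀ + a t₀ / (-(deriv a t₀))
  have htB : t₀ < B := lt_add_of_pos_right _ (div_pos (hpos t₀ le_rfl hT) (neg_pos.mpr hcontract))
  have hsub : ∀ t ∈ Icc t₀ B, t₀ ≤ t ∧ (t : EReal) < T :=
    fun t ht => ⟨ht.1, (EReal.coe_le_coe_iff.mpr ht.2).trans_lt hlt⟩
  have hconc : ConcaveOn ℝ (Icc t₀ B) a :=
    friedman_concaveOn (convex_Icc t₀ B) (fun t ht => hdiff t (hsub t ht).1 (hsub t ht).2)
      (fun t ht => hdiff2 t (hsub t ht).1 (hsub t ht).2)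
      (fun t ht => hpos t (hsub t ht).1 (hsub t ht).2)
      (fun t ht => hode t (hsub t ht).1 (hsub t ht).2)
      (fun t ht => hΛ t (hsub t ht).1 (hsub t ht).2)
  have htangent := hconc.le_tangent (left_mem_Icc.mpr htB.le) (right_mem_Icc.mpr htB.le) htB.le
    (hdiff t₀ le_rfl hT)
  have htangent_zero : a t₀ + deriv a t₀ * (B - t₀) = 0 := by
    have hne : deriv a t₀ ≠ 0 := hcontract.ne
    simp only [B]
    field_simp
    ring
  have hB := hsub B (right_mem_Icc.mpr htB.le)
  linarith [hpos B hB.1 hB.2]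
end

section
/- Let θ₀ < 0 and ρ₀ > 0, and set T = 3/(−θ₀). Suppose θ, ρ : [0, T) → ℝ are differentiable with θ(0) = θ₀, ρ(0) = ρ₀, θ′(t) ≤ −θ(t)²/3, and ρ′(t) = −θ(t)·ρ(t) for all t ∈ [0, T). Then ρ(t) ≥ ρ₀·(1 + θ₀·t/3)⁻³ for all t ∈ [0, T); in particular ρ(t) → ∞ as t → T⁻. -/
/-!
Let `Θ` be a primitive of `θ` with `Θ 0 = 0`. The continuity equation makes `ρ · exp Θ` constant,
so `ρ = ρ₀ / a ^ 3` for the scale factor `a = exp (Θ / 3)`. The Raychaudhuri inequality reads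
`a'' = (θ' + θ² / 3) · a / 3 ≤ 0`, so `a` is concave and lies below its tangent line
`1 + θ₀ t / 3` at `0`, which vanishes at `T = 3 / (-θ₀)`.
-/

open Set Filter Topology

theorem exists_hasDerivAt_of_continuousOn_Ico {f : ℝ → ℝ} {a b : ℝ}
    (hf : ContinuousOn f (Ico a b)) :
    ∃ F : ℝ → ℝ, F a = 0 ∧ ∀ s ∈ Ico a b, HasDerivAt F (f s) s := by
  -- Extended constantly to the left of `a`, `f` becomes continuous on the open set `Iio b`.
  set g : ℝ → ℝ := fun x ↦ f (max x a)
  refine ⟨fun s ↦ ∫ x in a..s, g x, intervalIntegral.integral_same, fun s hs ↦ ?_⟩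
  have hg : ContinuousOn g (Iio b) :=
    hf.comp (continuous_id.max continuous_const).continuousOn
      fun x hx ↦ ⟨le_max_right x a, max_lt hx (hs.1.trans_lt hs.2)⟩
  have hgs : g s = f s := by simp only [g, max_eq_left hs.1]
  rw [← hgs]
  refine intervalIntegral.integral_hasDerivAt_right
    (hg.mono ?_).intervalIntegrable (hg.stronglyMeasurableAtFilter isOpen_Iio s hs.2)
    (hg.continuousAt (Iio_mem_nhds hs.2))
  rw [uIcc_of_le hs.1]
  exact fun x hx ↦ hx.2.trans_lt hs.2

theorem mul_exp_eq_of_hasDerivAt {ρ θ Θ : ℝ → ℝ} {a b : ℝ}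
    (hΘ : ∀ s ∈ Ico a b, HasDerivAt Θ (θ s) s)
    (hρ : ∀ s ∈ Ico a b, HasDerivAt ρ (-θ s * ρ s) s) :
    ∀ s ∈ Ico a b, ρ s * Real.exp (Θ s) = ρ a * Real.exp (Θ a) := by
  have hderiv : ∀ s ∈ Ico a b, HasDerivAt (fun x ↦ ρ x * Real.exp (Θ x)) 0 s := fun s hs ↦
    ((hρ s hs).fun_mul (hΘ s hs).exp).congr_deriv (by ring)
  intro s hs
  have hsub : Icc a s ⊆ Ico a b := Icc_subset_Ico_right hs.2
  refine constant_of_has_deriv_right_zero (f := fun x ↦ ρ x * Real.exp (Θ x))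
    (fun x hx ↦ ?_) (fun x hx ↦ ?_) s (right_mem_Icc.2 hs.1)
  · exact (hderiv x (hsub hx)).continuousAt.continuousWithinAt
  · exact (hderiv x (hsub (Ico_subset_Icc_self hx))).hasDerivWithinAt

theorem concaveOn_exp_div_of_deriv_le_neg_sq_div {θ θ' Θ : ℝ → ℝ} {a b k : ℝ} (hk : 0 < k)
    (hΘ : ∀ s ∈ Ico a b, HasDerivAt Θ (θ s) s)
    (hθ : ∀ s ∈ Ico a b, HasDerivAt θ (θ' s) s)
    (hray : ∀ s ∈ Ico a b, θ' s ≤ -θ s ^ 2 / k) :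
    ConcaveOn ℝ (Ico a b) fun s ↦ Real.exp (Θ s / k) := by
  have hexp : ∀ s ∈ Ico a b, HasDerivAt (fun s ↦ Real.exp (Θ s / k))
      (θ s / k * Real.exp (Θ s / k)) s := fun s hs ↦ by
    simpa only [mul_comm] using ((hΘ s hs).div_const k).exp
  have hexp' : ∀ s ∈ Ico a b, HasDerivAt (fun s ↦ θ s / k * Real.exp (Θ s / k))
      ((θ' s + θ s ^ 2 / k) / k * Real.exp (Θ s / k)) s := fun s hs ↦
    (((hθ s hs).div_const k).fun_mul (hexp s hs)).congr_deriv (by ring)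
  refine concaveOn_of_hasDerivWithinAt2_nonpos (convex_Ico a b)
    (fun s hs ↦ (hexp s hs).continuousAt.continuousWithinAt)
    (fun s hs ↦ (hexp s (interior_subset hs)).hasDerivWithinAt)
    (fun s hs ↦ (hexp' s (interior_subset hs)).hasDerivWithinAt)
    (fun s hs ↦ ?_)
  have hsum : θ' s + θ s ^ 2 / k ≤ 0 := by
    linarith [hray s (interior_subset hs), neg_div k (θ s ^ 2)]
  exact mul_nonpos_of_nonpos_of_nonneg (div_nonpos_of_nonpos_of_nonneg hsum hk.le)
    (Real.exp_pos _).le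

theorem tendsto_div_one_add_mul_div_pow_atTop {n : ℕ} (hn : n ≠ 0) {θ₀ ρ₀ : ℝ} (hθ₀ : θ₀ < 0)
    (hρ₀ : 0 < ρ₀) :
    Tendsto (fun t ↦ ρ₀ / (1 + θ₀ * t / n) ^ n) (𝓝[<] (n / -θ₀)) atTop := by
  have hn' : (0 : ℝ) < n := by positivity
  have hpos : ∀ t < n / -θ₀, 0 < 1 + θ₀ * t / n := fun t ht ↦ by
    rw [lt_div_iff₀ (neg_pos.2 hθ₀)] at ht
    rw [← mul_pos_iff_of_pos_right hn', add_mul, div_mul_cancel₀ _ hn'.ne']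
    linarith
  have hzero : 1 + θ₀ * (n / -θ₀) / n = 0 := by
    field_simp [hθ₀.ne]
    ring
  have hlim : Tendsto (fun t : ℝ ↦ 1 + θ₀ * t / n) (𝓝[<] (n / -θ₀)) (𝓝[>] 0) :=
    tendsto_nhdsWithin_of_tendsto_nhds_of_eventually_within _
      ((Continuous.tendsto' (f := fun t : ℝ ↦ 1 + θ₀ * t / n) (by fun_prop) _ _ hzero).mono_left
        nhdsWithin_le_nhds)
      (eventually_nhdsWithin_of_forall hpos)
  simpa only [div_eq_mul_inv, inv_pow, Function.comp_def] using
    ((tendsto_pow_atTop hn).comp (tendsto_inv_nhdsGT_zero.comp hlim)).const_mul_atTop hρ₀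

theorem div_one_add_mul_div_pow_le_of_raychaudhuri {n : ℕ} (hn : n ≠ 0) {θ θ' ρ : ℝ → ℝ} {T : ℝ}
    (hθ : ∀ s ∈ Ico 0 T, HasDerivAt θ (θ' s) s)
    (hray : ∀ s ∈ Ico 0 T, θ' s ≤ -θ s ^ 2 / n)
    (hρ : ∀ s ∈ Ico 0 T, HasDerivAt ρ (-θ s * ρ s) s) (hρ0 : 0 ≤ ρ 0) :
    ∀ t ∈ Ico 0 T, ρ 0 / (1 + θ 0 * t / n) ^ n ≤ ρ t := by
  obtain ⟨Θ, hΘ0, hΘ⟩ := exists_hasDerivAt_of_continuousOn_Ico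
    fun s hs ↦ (hθ s hs).continuousAt.continuousWithinAt
  have hconc := concaveOn_exp_div_of_deriv_le_neg_sq_div (by positivity) hΘ hθ hray
  intro t ht
  have h0 : (0 : ℝ) ∈ Ico 0 T := left_mem_Ico.2 (ht.1.trans_lt ht.2)
  have htangent : Real.exp (Θ t / n) ≤ 1 + θ 0 * t / n := by
    rcases ht.1.eq_or_lt with rfl | htpos
    · simp [hΘ0]
    · have hderiv0 : HasDerivAt (fun s ↦ Real.exp (Θ s / n)) (θ 0 / n) 0 := by
        simpa [hΘ0] using ((hΘ 0 h0).div_const n).exp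
      have := hconc.slope_le_of_hasDerivAt h0 ht htpos hderiv0
      rw [slope_def_field, hΘ0, zero_div, Real.exp_zero, sub_zero, div_le_iff₀ htpos] at this
      linarith [div_mul_eq_mul_div (θ 0) n t]
  have hρt : ρ t = ρ 0 / Real.exp (Θ t / n) ^ n := by
    rw [← Real.exp_nat_mul, mul_div_cancel₀ _ (Nat.cast_ne_zero.2 hn),
      eq_div_iff (Real.exp_pos _).ne', mul_exp_eq_of_hasDerivAt hΘ hρ t ht, hΘ0, Real.exp_zero,
      mul_one]
  rw [hρt]
  exact div_le_div_of_nonneg_left hρ0 (by positivity) (pow_le_pow_left₀ (by positivity) htangent n)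

/-- Analytic content of the Raychaudhuri–Komar singularity theorem: for
irrotational dust with initially contracting congruence (`θ₀ < 0`), the
Raychaudhuri inequality `θ' ≤ -θ²/3` and the continuity equation `ρ' = -θρ`
force `ρ t ≥ ρ₀·(1 + θ₀ t/3)⁻³` on `[0, T)` with `T = 3/(-θ₀)`; in particular
the energy density diverges as `t → T⁻`. -/
theorem raychaudhuri_komar_density_divergence
    (θ₀ ρ₀ : ℝ) (hθ₀ : θ₀ < 0) (hρ₀ : 0 < ρ₀)
    (T : ℝ) (hTdef : T = 3 / (-θ₀))
    (θ ρ : ℝ → ℝ)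
    (hθdiff : ∀ t : ℝ, 0 ≤ t → t < T → DifferentiableAt ℝ θ t)
    (hρdiff : ∀ t : ℝ, 0 ≤ t → t < T → DifferentiableAt ℝ ρ t)
    (hθ0 : θ 0 = θ₀) (hρ0 : ρ 0 = ρ₀)
    (hray : ∀ t : ℝ, 0 ≤ t → t < T → deriv θ t ≤ -(θ t) ^ 2 / 3)
    (hcont : ∀ t : ℝ, 0 ≤ t → t < T → deriv ρ t = -(θ t) * ρ t) :
    (∀ t : ℝ, 0 ≤ t → t < T → ρ₀ / (1 + θ₀ * t / 3) ^ 3 ≤ ρ t) ∧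
    Filter.Tendsto ρ (nhdsWithin T (Set.Iio T)) Filter.atTop := by
  have hθ : ∀ s ∈ Ico 0 T, HasDerivAt θ (deriv θ s) s := fun s hs ↦
    (hθdiff s hs.1 hs.2).hasDerivAt
  have hρ : ∀ s ∈ Ico 0 T, HasDerivAt ρ (-θ s * ρ s) s := fun s hs ↦
    hcont s hs.1 hs.2 ▸ (hρdiff s hs.1 hs.2).hasDerivAt
  have hbound : ∀ t : ℝ, 0 ≤ t → t < T → ρ₀ / (1 + θ₀ * t / 3) ^ 3 ≤ ρ t := fun t ht0 htT ↦ by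
    simpa [hθ0, hρ0] using div_one_add_mul_div_pow_le_of_raychaudhuri (n := 3) three_ne_zero hθ
      (fun s hs ↦ by simpa using hray s hs.1 hs.2) hρ (hρ0 ▸ hρ₀.le) t ⟨ht0, htT⟩
  subst hTdef
  refine ⟨hbound, tendsto_atTop_mono' _ ?_
    (by simpa using tendsto_div_one_add_mul_div_pow_atTop (n := 3) three_ne_zero hθ₀ hρ₀)⟩
  filter_upwards [Ioo_mem_nhdsLT (div_pos three_pos (neg_pos.2 hθ₀))] with t ht
  exact hbound t ht.1.le ht.2
end

section
/- Let A > 0, χ₀ ∈ (0, π/2), let I ⊆ ℝ be an interval, and let a : I → ℝ be differentiable with a(t) > 0 and a′(t)² = A/a(t) − 1 for all t ∈ I. Define r : I → ℝ by r(t) = sin(χ₀)·a(t). Then r′(t)² = α/r(t) − (1 − E²) for all t ∈ I, where α = A·sin³(χ₀) and E = cos(χ₀). Moreover, α is the unique constant with this property: if α′ ∈ ℝ satisfies r′(t)² = α′/r(t) − (1 − cos²(χ₀)) for some t ∈ I, then α′ = A·sin³(χ₀). -/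
/-!
Since `r = sin χ₀ · a`, we get `r'² = sin² χ₀ · (A / a - 1) = A sin³ χ₀ / r - sin² χ₀`, and
`sin² χ₀ = 1 - cos² χ₀`. As `r` does not vanish, `α / r` determines `α`, which gives uniqueness.
-/

theorem sq_deriv_const_mul_eq_of_sq_deriv_eq {a : ℝ → ℝ} {A s t : ℝ} (hs : s ≠ 0) (ha : a t ≠ 0)
    (h : deriv a t ^ 2 = A / a t - 1) :
    deriv (fun t => s * a t) t ^ 2 = A * s ^ 3 / (s * a t) - s ^ 2 := by
  rw [deriv_const_mul_field, mul_pow, h]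
  field_simp

theorem oppenheimer_snyder_junction_general
    (A χ₀ : ℝ) (hχ₀ : χ₀ ∈ Set.Ioo 0 (Real.pi / 2))
    (I : Set ℝ)
    (a : ℝ → ℝ)
    (hpos : ∀ t ∈ I, 0 < a t)
    (hfried : ∀ t ∈ I, (deriv a t) ^ 2 = A / a t - 1)
    (r : ℝ → ℝ) (hr : r = fun t => Real.sin χ₀ * a t)
    (α E : ℝ) (hα : α = A * (Real.sin χ₀) ^ 3) (hE : E = Real.cos χ₀) :
    (∀ t ∈ I, (deriv r t) ^ 2 = α / r t - (1 - E ^ 2)) ∧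
    (∀ α' : ℝ, (∃ t ∈ I, (deriv r t) ^ 2 = α' / r t - (1 - (Real.cos χ₀) ^ 2)) →
      α' = A * (Real.sin χ₀) ^ 3) := by
  have hsin : Real.sin χ₀ ≠ 0 :=
    (Real.sin_pos_of_pos_of_lt_pi hχ₀.1 (hχ₀.2.trans (by linarith [Real.pi_pos]))).ne'
  have hcos : 1 - Real.cos χ₀ ^ 2 = Real.sin χ₀ ^ 2 := by rw [← Real.sin_sq]
  have geodesic : ∀ t ∈ I, deriv r t ^ 2 = α / r t - (1 - Real.cos χ₀ ^ 2) := fun t ht => by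
    rw [hr, hα, hcos]
    exact sq_deriv_const_mul_eq_of_sq_deriv_eq hsin (hpos t ht).ne' (hfried t ht)
  refine ⟨hE ▸ geodesic, ?_⟩
  rintro α' ⟨t, ht, hα'⟩
  have hrt : r t ≠ 0 := by rw [hr]; exact mul_ne_zero hsin (hpos t ht).ne'
  rw [← hα, ← div_left_inj' hrt]
  linarith [geodesic t ht]

/-- Oppenheimer–Snyder junction condition: if the scale factor satisfies the
closed Friedman dust equation `a'² = A/a - 1`, then `r = sin(χ₀)·a` satisfies
the Schwarzschild radial geodesic equation `r'² = α/r - (1 - E²)` with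
`α = A·sin³(χ₀)` and `E = cos(χ₀)`, and this value of `α` is unique. -/
theorem oppenheimer_snyder_junction
    (A χ₀ : ℝ) (hA : 0 < A) (hχ₀ : χ₀ ∈ Set.Ioo 0 (Real.pi / 2))
    (I : Set ℝ) (hI : I.OrdConnected)
    (a : ℝ → ℝ)
    (hdiff : ∀ t ∈ I, DifferentiableAt ℝ a t)
    (hpos : ∀ t ∈ I, 0 < a t)
    (hfried : ∀ t ∈ I, (deriv a t) ^ 2 = A / a t - 1)
    (r : ℝ → ℝ) (hr : r = fun t => Real.sin χ₀ * a t)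
    (α E : ℝ) (hα : α = A * (Real.sin χ₀) ^ 3) (hE : E = Real.cos χ₀) :
    (∀ t ∈ I, (deriv r t) ^ 2 = α / r t - (1 - E ^ 2)) ∧
    (∀ α' : ℝ, (∃ t ∈ I, (deriv r t) ^ 2 = α' / r t - (1 - (Real.cos χ₀) ^ 2)) →
      α' = A * (Real.sin χ₀) ^ 3) :=
  oppenheimer_snyder_junction_general A χ₀ hχ₀ I a hpos hfried r hr α E hα hE
end
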